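/- Every coset weighted potential game with respect to a fixed system of positive coset-depending weights possesses at least one pure Nash equilibrium, i.e. there exists s* ∈ S such that for every player i and every strategy x ∈ S_i, c_i(x, s*_{-i}) ≤ c_i(s*). -/
import Mathlib


/-- `f : S → ℝ` depends only on the strategies of the players other than `i`
(i.e. it is a function of `s_{-i}`). -/
def IndepOf {n : ℕ} {k : Fin n → ℕ} (i : Fin n) (f : (∀ j, Fin (k j)) → ℝ) : Prop :=
  ∀ (s : ∀ j, Fin (k j)) (x : Fin (k i)), f (Function.update s i x) = f s

/-- `P` is a coset weighted potential function for the game `c` with respect to the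
coset-depending weights `w`. -/
def IsCWPotentialFn {n : ℕ} {k : Fin n → ℕ} (c w : Fin n → (∀ j, Fin (k j)) → ℝ)
    (P : (∀ j, Fin (k j)) → ℝ) : Prop :=
  ∀ (i : Fin n) (s : ∀ j, Fin (k j)) (x y : Fin (k i)),
    c i (Function.update s i x) - c i (Function.update s i y)
      = w i s * (P (Function.update s i x) - P (Function.update s i y))

/-- **Proposition 3.3.** Every coset weighted potential game (w.r.t. a fixed system of
positive coset-depending weights) possesses at least one pure Nash equilibrium. -/
theorem cwpg_has_pure_nash (n : ℕ) (hn : 2 ≤ n) (k : Fin n → ℕ)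
    (hk : ∀ i, 2 ≤ k i) (c w : Fin n → (∀ j, Fin (k j)) → ℝ)
    (hw : ∀ i s, 0 < w i s) (hwI : ∀ i, IndepOf i (w i))
    (hpot : ∃ P, IsCWPotentialFn c w P) :
    ∃ sstar : ∀ j, Fin (k j), ∀ (i : Fin n) (x : Fin (k i)),
      c i (Function.update sstar i x) ≤ c i sstar := by
  obtain ⟨P, hP⟩ := hpot
  have : Nonempty (∀ j, Fin (k j)) := ⟨fun j => ⟨0, lt_of_lt_of_le two_pos (hk j)⟩⟩
  obtain ⟨sstar, hmax⟩ := Finite.exists_max P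
  refine ⟨sstar, fun i x => ?_⟩
  have h := hP i sstar x (sstar i)
  rw [Function.update_eq_self] at h
  nlinarith [hmax (Function.update sstar i x), hw i sstar]
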